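/- For all ν > 0 and x > 0, P_ν²(x) - P_{ν-1}(x) P_{ν+1}(x) < P_ν²(x) / (ν + 1), where P_ν(x) = I_ν(x) K_ν(x). -/

import Mathlib

/-!
For `I`, write `a`, `b`, `c` for the power-series terms of `I_ν`, `I_{ν-1}`, `I_{ν+1}`, so that
`I_ν²` and `I_{ν-1} I_{ν+1}` are Cauchy products. Since `b_k = (k + ν) a_k / (x/2)` and
`c_m = (x/2) a_m / (m + ν + 1)`, the symmetrised coefficient inequality
`2ν a_k a_m ≤ (ν + 1) (b_k c_m + b_m c_k)` reduces to an explicit rational gap which is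
nonnegative, and positive unless `k = m = 0`; summing gives `ν I_ν² < (ν + 1) I_{ν-1} I_{ν+1}`.
For `K`, the pointwise bound `cosh² (νt) ≤ cosh ((ν-1)t) cosh ((ν+1)t)` in the integral
representation and AM–GM with a free weight `s > 0` give `2 K_ν ≤ s K_{ν-1} + K_{ν+1} / s`; the
choice `s = K_ν / K_{ν-1}` turns this into `K_ν² ≤ K_{ν-1} K_{ν+1}`. Multiplying the two
inequalities and dividing by `ν + 1` gives the claim.
-/

open Real MeasureTheory Set Filter

/-- Modified Bessel function of the first kind `I_ν`. -/
noncomputable def besselI (ν x : ℝ) : ℝ :=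
  ∑' n : ℕ, (x / 2) ^ (2 * (n : ℝ) + ν) / ((n.factorial : ℝ) * Real.Gamma ((n : ℝ) + ν + 1))

/-- Modified Bessel function of the second kind `K_ν`. -/
noncomputable def besselK (ν x : ℝ) : ℝ :=
  ∫ t in Ioi (0 : ℝ), Real.exp (-x * Real.cosh t) * Real.cosh (ν * t)

/-- Bessel function of the first kind `J_ν`. -/
noncomputable def besselJ (ν x : ℝ) : ℝ :=
  ∑' n : ℕ, (-1 : ℝ) ^ n * (x / 2) ^ (2 * (n : ℝ) + ν) /
    ((n.factorial : ℝ) * Real.Gamma ((n : ℝ) + ν + 1))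

/-- Modified Struve function of the first kind `L_ν`. -/
noncomputable def struveL (ν x : ℝ) : ℝ :=
  ∑' n : ℕ, (x / 2) ^ (2 * (n : ℝ) + ν + 1) /
    (Real.Gamma ((n : ℝ) + 3 / 2) * Real.Gamma ((n : ℝ) + ν + 3 / 2))

/-- Airy function `Ai`. -/
noncomputable def airyAi (t : ℝ) : ℝ :=
  (1 / Real.pi) * ∫ s in Ioi (0 : ℝ), Real.cos (s ^ 3 / 3 + s * t)

/-- Landau constant `b_L = 2^{1/3} ⬝ sup_{t ≥ 0} Ai(t)`. -/
noncomputable def landau_bL : ℝ :=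
  (2 : ℝ) ^ ((1 : ℝ) / 3) * sSup (airyAi '' Ici 0)

/-- Landau constant `c_L = sup_{t ≥ 0} t^{1/3} J₀(t)`. -/
noncomputable def landau_cL : ℝ :=
  sSup ((fun t : ℝ => t ^ ((1 : ℝ) / 3) * besselJ 0 t) '' Ici 0)

open Finset

noncomputable def besselITerm (μ x : ℝ) (n : ℕ) : ℝ :=
  (x / 2) ^ (2 * (n : ℝ) + μ) / ((n.factorial : ℝ) * Gamma ((n : ℝ) + μ + 1))

section besselI

variable {μ x : ℝ}

theorem besselITerm_pos (hμ : -1 < μ) (hx : 0 < x) (n : ℕ) : 0 < besselITerm μ x n := by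
  have : 0 < (n : ℝ) + μ + 1 := by linarith [n.cast_nonneg (α := ℝ)]
  unfold besselITerm
  have := Gamma_pos_of_pos this
  positivity

theorem besselITerm_add_one (hx : 0 < x) (n : ℕ) (h : (n : ℝ) + μ + 1 ≠ 0) :
    besselITerm (μ + 1) x n * ((n : ℝ) + μ + 1) = x / 2 * besselITerm μ x n := by
  have hG : Gamma ((n : ℝ) + (μ + 1) + 1) = ((n : ℝ) + μ + 1) * Gamma ((n : ℝ) + μ + 1) := by
    rw [← Gamma_add_one h]
    ring_nf
  have hpow : (x / 2) ^ (2 * (n : ℝ) + (μ + 1)) = (x / 2) ^ (2 * (n : ℝ) + μ) * (x / 2) := by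
    rw [← rpow_add_one (by positivity)]
    ring_nf
  rw [besselITerm, besselITerm, hG, hpow]
  field_simp

theorem besselITerm_succ (hμ : -1 < μ) (hx : 0 < x) (n : ℕ) :
    besselITerm μ x (n + 1) =
      (x / 2) ^ 2 / (((n : ℝ) + 1) * ((n : ℝ) + μ + 1)) * besselITerm μ x n := by
  have h : 0 < (n : ℝ) + μ + 1 := by linarith [n.cast_nonneg (α := ℝ)]
  have hG : Gamma ((n + 1 : ℕ) + μ + 1) = ((n : ℝ) + μ + 1) * Gamma ((n : ℝ) + μ + 1) := by
    rw [← Gamma_add_one h.ne']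
    push_cast
    ring_nf
  have hpow :
      (x / 2) ^ (2 * ((n + 1 : ℕ) : ℝ) + μ) = (x / 2) ^ (2 * (n : ℝ) + μ) * (x / 2) ^ 2 := by
    rw [← rpow_natCast, ← rpow_add (by positivity)]
    push_cast
    ring_nf
  have := (Gamma_pos_of_pos h).ne'
  rw [besselITerm, besselITerm, hG, hpow, Nat.factorial_succ]
  push_cast
  field_simp

theorem summable_besselITerm (hμ : -1 < μ) (hx : 0 < x) : Summable (besselITerm μ x) := by
  refine summable_of_ratio_norm_eventually_le (r := 1 / 2) (by norm_num) ?_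
  filter_upwards [tendsto_natCast_atTop_atTop.eventually_ge_atTop (2 * (x / 2) ^ 2 + |μ|)]
    with n hn
  have h0 := besselITerm_pos hμ hx n
  rw [norm_of_nonneg (besselITerm_pos hμ hx (n + 1)).le, norm_of_nonneg h0.le,
    besselITerm_succ hμ hx]
  have hμ' := neg_abs_le μ
  refine mul_le_mul_of_nonneg_right ?_ h0.le
  rw [div_le_iff₀ (by nlinarith [abs_nonneg μ])]
  nlinarith [abs_nonneg μ, sq_nonneg (x / 2)]

theorem besselI_pos (hμ : -1 < μ) (hx : 0 < x) : 0 < besselI μ x :=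
  (summable_besselITerm hμ hx).tsum_pos (fun n => (besselITerm_pos hμ hx n).le) 0
    (besselITerm_pos hμ hx 0)

theorem hasSum_sum_antidiagonal_besselITerm {a b : ℝ} (ha : -1 < a) (hb : -1 < b) (hx : 0 < x) :
    HasSum (fun n => ∑ kl ∈ antidiagonal n, besselITerm a x kl.1 * besselITerm b x kl.2)
      (besselI a x * besselI b x) := by
  have hfa := summable_besselITerm ha hx
  have hfb := summable_besselITerm hb hx
  have hprod := hfa.mul_of_nonneg hfb (fun n => (besselITerm_pos ha hx n).le)
    (fun n => (besselITerm_pos hb hx n).le)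
  change HasSum _ ((∑' n, besselITerm a x n) * ∑' n, besselITerm b x n)
  rw [hfa.tsum_mul_tsum_eq_tsum_sum_antidiagonal hfb hprod]
  exact (summable_sum_mul_antidiagonal_of_summable_mul hprod).hasSum

end besselI

theorem two_mul_sum_antidiagonal_mul {R : Type*} [CommSemiring R] (f g : ℕ → R) (n : ℕ) :
    2 * ∑ kl ∈ antidiagonal n, f kl.1 * g kl.2 =
      ∑ kl ∈ antidiagonal n, (f kl.1 * g kl.2 + f kl.2 * g kl.1) := by
  have hswap := Nat.sum_antidiagonal_swap (n := n) (f := fun kl => f kl.1 * g kl.2)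
  simp only [Prod.fst_swap, Prod.snd_swap] at hswap
  rw [sum_add_distrib, hswap, two_mul]

section besselITuran

variable {ν x : ℝ}

theorem besselITerm_sub_one_mul_besselITerm_add_one (hν : 0 < ν) (hx : 0 < x) (k m : ℕ) :
    besselITerm (ν - 1) x k * besselITerm (ν + 1) x m =
      ((k : ℝ) + ν) / ((m : ℝ) + ν + 1) * (besselITerm ν x k * besselITerm ν x m) := by
  have hk : 0 < (k : ℝ) + ν := by positivity
  have hm : 0 < (m : ℝ) + ν + 1 := by positivity
  have hR := besselITerm_add_one hx m hm.ne'
  have hL := besselITerm_add_one (μ := ν - 1) hx k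
    (by rw [add_assoc, sub_add_cancel]; exact hk.ne')
  rw [sub_add_cancel, add_assoc, sub_add_cancel] at hL
  rw [div_mul_eq_mul_div, eq_div_iff hm.ne']
  refine mul_left_cancel₀ (show x / 2 ≠ 0 by positivity) ?_
  linear_combination (x / 2 * besselITerm (ν - 1) x k) * hR - (x / 2 * besselITerm ν x m) * hL

theorem besselITerm_turan_gap (hν : 0 < ν) (hx : 0 < x) (k m : ℕ) :
    (ν + 1) * (besselITerm (ν - 1) x k * besselITerm (ν + 1) x m +
        besselITerm (ν - 1) x m * besselITerm (ν + 1) x k) -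
      2 * ν * (besselITerm ν x k * besselITerm ν x m) =
    (ν * ((k : ℝ) - m) ^ 2 + k * (k + ν + 1) + m * (m + ν + 1)) /
        (((k : ℝ) + ν + 1) * ((m : ℝ) + ν + 1)) * (besselITerm ν x k * besselITerm ν x m) := by
  have hk : 0 < (k : ℝ) + ν + 1 := by positivity
  have hm : 0 < (m : ℝ) + ν + 1 := by positivity
  rw [besselITerm_sub_one_mul_besselITerm_add_one hν hx,
    besselITerm_sub_one_mul_besselITerm_add_one hν hx, mul_comm (besselITerm ν x m)]
  field_simp
  ring

theorem two_mul_mul_besselITerm_le (hν : 0 < ν) (hx : 0 < x) (k m : ℕ) :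
    2 * ν * (besselITerm ν x k * besselITerm ν x m) ≤
      (ν + 1) * (besselITerm (ν - 1) x k * besselITerm (ν + 1) x m +
        besselITerm (ν - 1) x m * besselITerm (ν + 1) x k) := by
  have hgap := besselITerm_turan_gap hν hx k m
  have hν' : -1 < ν := by linarith
  have hpos := mul_pos (besselITerm_pos hν' hx k) (besselITerm_pos hν' hx m)
  have : 0 ≤ (ν * ((k : ℝ) - m) ^ 2 + k * (k + ν + 1) + m * (m + ν + 1)) /
      (((k : ℝ) + ν + 1) * ((m : ℝ) + ν + 1)) * (besselITerm ν x k * besselITerm ν x m) := by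
    positivity
  linarith

theorem two_mul_mul_besselITerm_lt (hν : 0 < ν) (hx : 0 < x) {k m : ℕ} (hkm : k + m ≠ 0) :
    2 * ν * (besselITerm ν x k * besselITerm ν x m) <
      (ν + 1) * (besselITerm (ν - 1) x k * besselITerm (ν + 1) x m +
        besselITerm (ν - 1) x m * besselITerm (ν + 1) x k) := by
  have hgap := besselITerm_turan_gap hν hx k m
  have hν' : -1 < ν := by linarith
  have hpos := mul_pos (besselITerm_pos hν' hx k) (besselITerm_pos hν' hx m)
  have hkm' : (1 : ℝ) ≤ k + m := by exact_mod_cast Nat.one_le_iff_ne_zero.mpr hkm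
  have : 0 < (ν * ((k : ℝ) - m) ^ 2 + k * (k + ν + 1) + m * (m + ν + 1)) /
      (((k : ℝ) + ν + 1) * ((m : ℝ) + ν + 1)) * (besselITerm ν x k * besselITerm ν x m) := by
    refine mul_pos (div_pos ?_ (by positivity)) hpos
    nlinarith [sq_nonneg ((k : ℝ) - m), k.cast_nonneg (α := ℝ), m.cast_nonneg (α := ℝ)]
  linarith

theorem mul_sum_antidiagonal_besselITerm_le (hν : 0 < ν) (hx : 0 < x) (n : ℕ) :
    ν * ∑ kl ∈ antidiagonal n, besselITerm ν x kl.1 * besselITerm ν x kl.2 ≤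
      (ν + 1) * ∑ kl ∈ antidiagonal n, besselITerm (ν - 1) x kl.1 * besselITerm (ν + 1) x kl.2 := by
  have h := sum_le_sum fun kl (_ : kl ∈ antidiagonal n) =>
    two_mul_mul_besselITerm_le hν hx kl.1 kl.2
  rw [← mul_sum, ← mul_sum, ← two_mul_sum_antidiagonal_mul] at h
  linarith

theorem mul_sum_antidiagonal_besselITerm_lt (hν : 0 < ν) (hx : 0 < x) {n : ℕ} (hn : n ≠ 0) :
    ν * ∑ kl ∈ antidiagonal n, besselITerm ν x kl.1 * besselITerm ν x kl.2 <
      (ν + 1) * ∑ kl ∈ antidiagonal n, besselITerm (ν - 1) x kl.1 * besselITerm (ν + 1) x kl.2 := by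
  have h := sum_lt_sum_of_nonempty ⟨(0, n), by simp⟩ fun kl (hkl : kl ∈ antidiagonal n) =>
    two_mul_mul_besselITerm_lt hν hx (by rwa [mem_antidiagonal.mp hkl])
  rw [← mul_sum, ← mul_sum, ← two_mul_sum_antidiagonal_mul] at h
  linarith

theorem mul_besselI_sq_lt (hν : 0 < ν) (hx : 0 < x) :
    ν * besselI ν x ^ 2 < (ν + 1) * (besselI (ν - 1) x * besselI (ν + 1) x) := by
  have hsq := (hasSum_sum_antidiagonal_besselITerm (a := ν) (b := ν)
    (by linarith) (by linarith) hx).mul_left ν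
  have hprod := (hasSum_sum_antidiagonal_besselITerm (a := ν - 1) (b := ν + 1)
    (by linarith) (by linarith) hx).mul_left (ν + 1)
  rw [sq]
  exact hasSum_lt (i := 1) (mul_sum_antidiagonal_besselITerm_le hν hx)
    (mul_sum_antidiagonal_besselITerm_lt hν hx one_ne_zero) hsq hprod

end besselITuran

theorem two_mul_le_mul_add_div_of_sq_le_mul {a b c s : ℝ} (ha : 0 < a) (hs : 0 < s)
    (h : c ^ 2 ≤ a * b) : 2 * c ≤ s * a + b / s := by
  rw [← sub_nonneg]
  have : s * a + b / s - 2 * c = ((s * a - c) ^ 2 + (a * b - c ^ 2)) / (s * a) := by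
    field_simp
    ring
  rw [this]
  have := sub_nonneg.mpr h
  positivity

namespace Real

theorem cosh_le_exp_abs (y : ℝ) : cosh y ≤ exp |y| := by
  rw [cosh_eq]
  linarith [exp_le_exp.2 (le_abs_self y), exp_le_exp.2 (neg_le_abs y)]

theorem sq_div_four_le_cosh {t : ℝ} (ht : 0 ≤ t) : t ^ 2 / 4 ≤ cosh t := by
  rw [cosh_eq]
  linarith [quadratic_le_exp_of_nonneg ht, exp_pos (-t)]

theorem cosh_sq_le_cosh_sub_mul_cosh_add (a t : ℝ) : cosh a ^ 2 ≤ cosh (a - t) * cosh (a + t) := by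
  rw [cosh_sub, cosh_add]
  nlinarith [cosh_sq_sub_sinh_sq a, cosh_sq_sub_sinh_sq t, sq_nonneg (sinh t)]

end Real

section besselK

variable {x : ℝ}

theorem continuous_besselK_integrand (μ x : ℝ) :
    Continuous fun t => exp (-x * cosh t) * cosh (μ * t) := by
  fun_prop

theorem integrableOn_besselK_integrand (μ : ℝ) (hx : 0 < x) :
    IntegrableOn (fun t => exp (-x * cosh t) * cosh (μ * t)) (Ioi 0) := by
  refine integrable_of_isBigO_exp_neg one_pos (continuous_besselK_integrand μ x).continuousOn
    (Asymptotics.IsBigO.of_bound 1 ?_)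
  filter_upwards [eventually_ge_atTop (4 * (|μ| + 1) / x), eventually_ge_atTop 0] with t ht ht0
  have hcosh := sq_div_four_le_cosh ht0
  have hlin : (|μ| + 1) * t ≤ x * cosh t := by
    rw [div_le_iff₀ hx] at ht
    nlinarith
  rw [norm_of_nonneg (by positivity), norm_of_nonneg (exp_pos _).le, one_mul]
  calc exp (-x * cosh t) * cosh (μ * t) ≤ exp (-x * cosh t) * exp (|μ| * t) := by
        gcongr
        simpa [abs_mul, abs_of_nonneg ht0] using cosh_le_exp_abs (μ * t)
    _ = exp (|μ| * t - x * cosh t) := by rw [← exp_add]; ring_nf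
    _ ≤ exp (-1 * t) := exp_le_exp.2 (by linarith)

theorem besselK_pos (μ : ℝ) (hx : 0 < x) : 0 < besselK μ x := by
  have hpos (t : ℝ) : 0 < exp (-x * cosh t) * cosh (μ * t) := by positivity
  rw [besselK, setIntegral_pos_iff_support_of_nonneg_ae (ae_of_all _ fun t => (hpos t).le)
    (integrableOn_besselK_integrand μ hx)]
  simp [Function.support, (cosh_pos _).ne']

theorem two_mul_besselK_le (ν : ℝ) (hx : 0 < x) {s : ℝ} (hs : 0 < s) :
    2 * besselK ν x ≤ s * besselK (ν - 1) x + besselK (ν + 1) x / s := by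
  have hint (μ : ℝ) := integrableOn_besselK_integrand μ hx
  calc 2 * besselK ν x = ∫ t in Ioi 0, 2 * (exp (-x * cosh t) * cosh (ν * t)) :=
        (integral_const_mul _ _).symm
    _ ≤ ∫ t in Ioi 0, (s * (exp (-x * cosh t) * cosh ((ν - 1) * t)) +
          exp (-x * cosh t) * cosh ((ν + 1) * t) / s) := by
        refine setIntegral_mono ((hint ν).const_mul 2)
          (((hint _).const_mul s).add ((hint _).div_const s)) fun t => ?_
        refine two_mul_le_mul_add_div_of_sq_le_mul (by positivity) hs ?_
        have h := cosh_sq_le_cosh_sub_mul_cosh_add (ν * t) t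
        rw [← sub_one_mul, ← add_one_mul] at h
        calc (exp (-x * cosh t) * cosh (ν * t)) ^ 2
            = exp (-x * cosh t) ^ 2 * cosh (ν * t) ^ 2 := by ring
          _ ≤ exp (-x * cosh t) ^ 2 * (cosh ((ν - 1) * t) * cosh ((ν + 1) * t)) := by gcongr
          _ = _ := by ring
    _ = s * besselK (ν - 1) x + besselK (ν + 1) x / s := by
        rw [integral_add ((hint _).const_mul s) ((hint _).div_const s), integral_const_mul,
          integral_div]
        rfl

theorem besselK_sq_le_mul (ν : ℝ) (hx : 0 < x) :
    besselK ν x ^ 2 ≤ besselK (ν - 1) x * besselK (ν + 1) x := by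
  have hK := besselK_pos ν hx
  have hKm := besselK_pos (ν - 1) hx
  have h := two_mul_besselK_le ν hx (div_pos hK hKm)
  rw [div_mul_cancel₀ _ hKm.ne', div_div_eq_mul_div] at h
  have : besselK ν x ≤ besselK (ν + 1) x * besselK (ν - 1) x / besselK ν x := by linarith
  rw [le_div_iff₀ hK] at this
  nlinarith

end besselK

theorem stmt16 (ν x : ℝ) (hν : 0 < ν) (hx : 0 < x) :
    (besselI ν x * besselK ν x) ^ 2 -
        (besselI (ν - 1) x * besselK (ν - 1) x) * (besselI (ν + 1) x * besselK (ν + 1) x) <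
      (besselI ν x * besselK ν x) ^ 2 / (ν + 1) := by
  have hI := mul_besselI_sq_lt hν hx
  have hK := besselK_sq_le_mul ν hx
  have hK0 := besselK_pos ν hx
  have hI0 : 0 < besselI (ν - 1) x * besselI (ν + 1) x :=
    mul_pos (besselI_pos (by linarith) hx) (besselI_pos (by linarith) hx)
  have key : ν * (besselI ν x * besselK ν x) ^ 2 < (ν + 1) *
      ((besselI (ν - 1) x * besselK (ν - 1) x) * (besselI (ν + 1) x * besselK (ν + 1) x)) :=
    calc ν * (besselI ν x * besselK ν x) ^ 2 = ν * besselI ν x ^ 2 * besselK ν x ^ 2 := by ring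
      _ < (ν + 1) * (besselI (ν - 1) x * besselI (ν + 1) x) * besselK ν x ^ 2 := by gcongr
      _ ≤ (ν + 1) * (besselI (ν - 1) x * besselI (ν + 1) x) *
          (besselK (ν - 1) x * besselK (ν + 1) x) := by gcongr
      _ = _ := by ring
  rw [lt_div_iff₀ (by linarith)]
  linarith
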